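/- arXiv:1706.00407 — 2 statements merged into one kernel-verified Lean document; each statement's English description precedes it below -/
import Mathlib

section
/- For every positive integer n, 3 * (sum over k from (1+(-1)^n)/2 to n of (-1)^{k-1} L_k^4) = (-1)^{n-1} 5 F_n F_{n+1} (L_{n-2} L_{n+3} + 2(-1)^n). -/
/-- Fibonacci numbers extended to all integers via `F_{-n} = (-1)^{n-1} F_n`. -/
def fibZ (n : ℤ) : ℤ :=
  if 0 ≤ n then (Nat.fib n.toNat : ℤ) else (-1) ^ ((-n).toNat + 1) * (Nat.fib (-n).toNat : ℤ)

/-- Lucas numbers extended to all integers, `L_n = F_{n-1} + F_{n+1}`. -/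
def lucasZ (n : ℤ) : ℤ := fibZ (n - 1) + fibZ (n + 1)

lemma fibZ_natCast (n : ℕ) : fibZ n = Nat.fib n := by
  simp [fibZ]

lemma fibZ_neg_natCast (n : ℕ) : fibZ (-(n : ℤ)) = (-1) ^ (n + 1) * Nat.fib n := by
  cases n with
  | zero => simp [fibZ]
  | succ m =>
    rw [fibZ, if_neg (by push_cast; omega)]
    norm_num

lemma fibZ_add_two (m : ℤ) : fibZ (m + 2) = fibZ (m + 1) + fibZ m := by
  cases m with
  | ofNat k =>
    have h2 : ((Int.ofNat k) + 2) = ((k + 2 : ℕ) : ℤ) := by simp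
    have h1 : ((Int.ofNat k) + 1) = ((k + 1 : ℕ) : ℤ) := by simp
    have h0 : (Int.ofNat k) = ((k : ℕ) : ℤ) := by simp
    rw [h2, h1, h0, fibZ_natCast, fibZ_natCast, fibZ_natCast, Nat.fib_add_two]
    push_cast; ring
  | negSucc k =>
    cases k with
    | zero =>
      show fibZ 1 = fibZ 0 + fibZ (-1)
      have h1 : fibZ 1 = 1 := by rw [show (1:ℤ) = ((1:ℕ):ℤ) by norm_num, fibZ_natCast]; simp
      have h0 : fibZ 0 = 0 := by rw [show (0:ℤ) = ((0:ℕ):ℤ) by norm_num, fibZ_natCast]; simp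
      have hm : fibZ (-1) = 1 := by
        rw [show (-1:ℤ) = -((1:ℕ):ℤ) by norm_num, fibZ_neg_natCast]; simp
      rw [h1, h0, hm]; norm_num
    | succ j =>
      have h2 : (Int.negSucc (j + 1) + 2) = -((j : ℕ) : ℤ) := by
        rw [Int.negSucc_eq]; push_cast; ring
      have h1 : (Int.negSucc (j + 1) + 1) = -(((j + 1 : ℕ)) : ℤ) := by
        rw [Int.negSucc_eq]; push_cast; ring
      have h0 : (Int.negSucc (j + 1)) = -(((j + 2 : ℕ)) : ℤ) := by
        rw [Int.negSucc_eq]; push_cast; ring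
      rw [h2, h1, h0, fibZ_neg_natCast, fibZ_neg_natCast, fibZ_neg_natCast,
        Nat.fib_add_two]
      push_cast; ring

lemma fibZ_sub_one (m : ℤ) : fibZ (m - 1) = fibZ (m + 1) - fibZ m := by
  have h := fibZ_add_two (m - 1)
  rw [show m - 1 + 2 = m + 1 by ring, show m - 1 + 1 = m by ring] at h
  linarith

lemma fib_rel (n : ℕ) :
    fibZ ((n : ℤ) + 1) ^ 2 - fibZ ((n : ℤ) + 1) * fibZ (n : ℤ) - fibZ (n : ℤ) ^ 2
      = (-1 : ℤ) ^ n := by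
  induction n with
  | zero =>
    have h1 : fibZ 1 = 1 := by rw [show (1:ℤ) = ((1:ℕ):ℤ) by norm_num, fibZ_natCast]; simp
    have h0 : fibZ 0 = 0 := by rw [show (0:ℤ) = ((0:ℕ):ℤ) by norm_num, fibZ_natCast]; simp
    push_cast
    norm_num [h1, h0]
  | succ n ih =>
    have h2 : fibZ ((n : ℤ) + 2) = fibZ ((n : ℤ) + 1) + fibZ (n : ℤ) := fibZ_add_two n
    push_cast
    rw [show ((n:ℤ) + 1 + 1) = (n:ℤ) + 2 by ring, h2]
    rw [pow_succ]
    linear_combination (-1 : ℤ) * ih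

lemma aux17 (n : ℕ) :
    3 * ∑ k ∈ Finset.Icc 0 n, (-1 : ℤ) ^ (k + 1) * lucasZ k ^ 4
      = (-1 : ℤ) ^ (n + 1) * 5 * fibZ n * fibZ ((n : ℤ) + 1)
          * (lucasZ ((n : ℤ) - 2) * lucasZ ((n : ℤ) + 3) + 2 * (-1 : ℤ) ^ n)
        - 24 * (1 + (-1 : ℤ) ^ n) := by
  induction n with
  | zero =>
    decide
  | succ n ih =>
    rw [Finset.sum_Icc_succ_top (Nat.zero_le _), mul_add, ih]
    set a := fibZ (n : ℤ) with ha
    set b := fibZ ((n : ℤ) + 1) with hb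
    have f2 : fibZ ((n : ℤ) + 2) = b + a := fibZ_add_two (n : ℤ)
    have f3 : fibZ ((n : ℤ) + 3) = (b + a) + b := by
      have h := fibZ_add_two ((n : ℤ) + 1)
      rw [show (n:ℤ) + 1 + 2 = (n:ℤ) + 3 by ring, show (n:ℤ) + 1 + 1 = (n:ℤ) + 2 by ring] at h
      rw [h, f2]
    have f4 : fibZ ((n : ℤ) + 4) = ((b + a) + b) + (b + a) := by
      have h := fibZ_add_two ((n : ℤ) + 2)
      rw [show (n:ℤ) + 2 + 2 = (n:ℤ) + 4 by ring, show (n:ℤ) + 2 + 1 = (n:ℤ) + 3 by ring] at h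
      rw [h, f3, f2]
    have f5 : fibZ ((n : ℤ) + 5) = (((b + a) + b) + (b + a)) + ((b + a) + b) := by
      have h := fibZ_add_two ((n : ℤ) + 3)
      rw [show (n:ℤ) + 3 + 2 = (n:ℤ) + 5 by ring, show (n:ℤ) + 3 + 1 = (n:ℤ) + 4 by ring] at h
      rw [h, f4, f3]
    have fm1 : fibZ ((n : ℤ) - 1) = b - a := by
      rw [fibZ_sub_one, ← hb, ← ha]
    have fm2 : fibZ ((n : ℤ) - 2) = a - (b - a) := by
      have h := fibZ_sub_one ((n : ℤ) - 1)
      rw [show (n:ℤ) - 1 - 1 = (n:ℤ) - 2 by ring, show (n:ℤ) - 1 + 1 = (n:ℤ) by ring] at h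
      rw [h, fm1, ← ha]
    have fm3 : fibZ ((n : ℤ) - 3) = (b - a) - (a - (b - a)) := by
      have h := fibZ_sub_one ((n : ℤ) - 2)
      rw [show (n:ℤ) - 2 - 1 = (n:ℤ) - 3 by ring, show (n:ℤ) - 2 + 1 = (n:ℤ) - 1 by ring] at h
      rw [h, fm1, fm2]
    have L1 : lucasZ ((n : ℤ) + 1) = a + (b + a) := by
      rw [lucasZ, show (n:ℤ) + 1 - 1 = (n:ℤ) by ring, show (n:ℤ) + 1 + 1 = (n:ℤ) + 2 by ring,
        f2, ← ha]
    have Lm2 : lucasZ ((n : ℤ) - 2) = ((b - a) - (a - (b - a))) + (b - a) := by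
      rw [lucasZ, show (n:ℤ) - 2 - 1 = (n:ℤ) - 3 by ring, show (n:ℤ) - 2 + 1 = (n:ℤ) - 1 by ring,
        fm3, fm1]
    have L3 : lucasZ ((n : ℤ) + 3) = (b + a) + (((b + a) + b) + (b + a)) := by
      rw [lucasZ, show (n:ℤ) + 3 - 1 = (n:ℤ) + 2 by ring, show (n:ℤ) + 3 + 1 = (n:ℤ) + 4 by ring,
        f2, f4]
    have Lm1 : lucasZ ((n : ℤ) - 1) = (a - (b - a)) + a := by
      rw [lucasZ, show (n:ℤ) - 1 - 1 = (n:ℤ) - 2 by ring, show (n:ℤ) - 1 + 1 = (n:ℤ) by ring,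
        fm2, ← ha]
    have L4 : lucasZ ((n : ℤ) + 4) = ((b + a) + b) + ((((b + a) + b) + (b + a)) + ((b + a) + b)) := by
      rw [lucasZ, show (n:ℤ) + 4 - 1 = (n:ℤ) + 3 by ring, show (n:ℤ) + 4 + 1 = (n:ℤ) + 5 by ring,
        f3, f5]
    have hrel := fib_rel n
    rw [← ha, ← hb] at hrel
    push_cast
    rw [show ((n:ℤ) + 1 - 2) = (n:ℤ) - 1 by ring, show ((n:ℤ) + 1 + 3) = (n:ℤ) + 4 by ring,
      show ((n:ℤ) + 1 + 1) = (n:ℤ) + 2 by ring]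
    rw [L1, Lm2, L3, Lm1, L4, f2]
    rcases Nat.even_or_odd n with h | h
    · have hs : (-1 : ℤ) ^ n = 1 := h.neg_one_pow
      rw [hs] at hrel
      simp only [pow_succ, hs]
      linear_combination (-(48 * a ^ 2) - 48 * a * b + 38 * b ^ 2 + 48) * hrel
    · have hs : (-1 : ℤ) ^ n = -1 := h.neg_one_pow
      rw [hs] at hrel
      simp only [pow_succ, hs]
      linear_combination (48 * a ^ 2 + 48 * a * b - 38 * b ^ 2 + 48) * hrel

lemma unit_sign (k : ℕ) :
    (((-1 : ℤˣ) ^ ((k : ℤ) - 1) : ℤˣ) : ℤ) = (-1 : ℤ) ^ (k + 1) := by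
  rw [zpow_sub, zpow_natCast, zpow_one]
  simp [pow_succ]

lemma unit_sign' (n : ℕ) :
    (((-1 : ℤˣ) ^ ((n : ℤ)) : ℤˣ) : ℤ) = (-1 : ℤ) ^ n := by
  rw [zpow_natCast]; simp

theorem stmt17 (n : ℕ) (hn : 0 < n) :
    3 * ∑ k ∈ Finset.Icc ((1 + (-1 : ℤ) ^ n) / 2).toNat n,
          (((-1 : ℤˣ) ^ ((k : ℤ) - 1) : ℤˣ) : ℤ) * lucasZ k ^ 4
      = (((-1 : ℤˣ) ^ ((n : ℤ) - 1) : ℤˣ) : ℤ) * 5 * fibZ n * fibZ (n + 1)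
          * (lucasZ ((n : ℤ) - 2) * lucasZ (n + 3) + 2 * (((-1 : ℤˣ) ^ (n : ℤ) : ℤˣ) : ℤ)) := by
  have key := aux17 n
  rcases Nat.even_or_odd n with h | h
  · have hs : (-1 : ℤ) ^ n = 1 := h.neg_one_pow
    have hlo : (((1 + (-1 : ℤ) ^ n) / 2).toNat) = 1 := by rw [hs]; norm_num
    rw [hlo]
    have hsplit : Finset.Icc 0 n = insert 0 (Finset.Icc 1 n) := by
      ext x; simp; omega
    rw [hsplit, Finset.sum_insert (by simp)] at key
    have hL0 : ((-1 : ℤ)) ^ (0 + 1) * lucasZ ((0 : ℕ) : ℤ) ^ 4 = -16 := by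
      have : lucasZ ((0 : ℕ) : ℤ) = 2 := by
        rw [lucasZ, show ((0:ℕ):ℤ) - 1 = -((1:ℕ):ℤ) by norm_num,
          show ((0:ℕ):ℤ) + 1 = ((1:ℕ):ℤ) by norm_num, fibZ_neg_natCast, fibZ_natCast]
        simp
      rw [this]; norm_num
    rw [hL0] at key
    simp only [unit_sign, unit_sign']
    rw [hs] at key ⊢
    linarith [key]
  · have hs : (-1 : ℤ) ^ n = -1 := h.neg_one_pow
    have hlo : (((1 + (-1 : ℤ) ^ n) / 2).toNat) = 0 := by rw [hs]; norm_num
    rw [hlo]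
    simp only [unit_sign, unit_sign']
    rw [hs] at key ⊢
    linarith [key]
end

section
/- For every positive odd integer m and every positive integer n, F_m * (sum over k from 1 to n of (-1)^{k-1} L_{2mk}) = (-1)^{n-1} F_{mn} L_{mn+m}. -/
open Finset

theorem fibZ_eq_intFib : fibZ = Int.fib := by
  funext n
  obtain ⟨k, rfl | rfl⟩ := n.eq_nat_or_neg <;> simp [fibZ, Int.fib_neg_natCast]

theorem fibZ_neg_of_odd {n : ℤ} (hn : Odd n) : fibZ (-n) = fibZ n := by
  simp [fibZ_eq_intFib, Int.fib_neg, Int.not_even_iff_odd.2 hn]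

theorem fibZ_mul_lucasZ (a b : ℤ) :
    fibZ a * lucasZ b = fibZ (a + b) + b.negOnePow * fibZ (a - b) := by
  simp only [lucasZ, fibZ_eq_intFib]
  have hsum := Int.fib_add a b
  have hdiff := Int.fib_add a (-b)
  rw [← sub_eq_add_neg] at hdiff
  rw [show -b + 1 = -(b - 1) by ring, Int.fib_neg, Int.fib_neg] at hdiff
  rcases Int.even_or_odd b with hb | hb
  · have hb' : ¬ Even (b - 1) := by rw [Int.not_even_iff_odd]; exact hb.sub_odd odd_one
    simp only [hb, hb', if_true, if_false, Int.negOnePow_even _ hb] at hdiff ⊢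
    push_cast
    linear_combination -hsum - hdiff
  · have hb' : Even (b - 1) := hb.sub_odd odd_one
    simp only [Int.not_even_iff_odd.2 hb, hb', if_true, if_false, Int.negOnePow_odd _ hb] at hdiff ⊢
    push_cast
    linear_combination hdiff - hsum

theorem fibZ_mul_lucasZ_two_mul_of_odd {m : ℤ} (hm : Odd m) (k : ℤ) :
    fibZ m * lucasZ (2 * m * k) = fibZ (2 * m * k + m) + fibZ (2 * m * k - m) := by
  have hodd : Odd (2 * m * k - m) := ((even_two_mul m).mul_right k).sub_odd hm
  rw [fibZ_mul_lucasZ, Int.negOnePow_even _ ⟨m * k, by ring⟩, Units.val_one, one_mul,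
    show m - 2 * m * k = -(2 * m * k - m) by ring, fibZ_neg_of_odd hodd, add_comm m]

theorem fibZ_mul_lucasZ_add_self_of_odd {m : ℤ} (hm : Odd m) (j : ℤ) :
    fibZ (m * j) * lucasZ (m * j + m) = fibZ (2 * m * j + m) + (j + 1).negOnePow * fibZ m := by
  have hsign : (m * j + m).negOnePow = (j + 1).negOnePow := by
    obtain ⟨r, rfl⟩ := hm
    rw [Int.negOnePow_eq_iff]
    exact ⟨r * (j + 1), by ring⟩
  rw [fibZ_mul_lucasZ, show m * j - (m * j + m) = -m by ring, fibZ_neg_of_odd hm, hsign]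
  ring_nf

theorem sum_Icc_negOnePow_mul_add_pred (a : ℤ → ℤ) (n : ℕ) :
    ∑ k ∈ Icc 1 n, ((k : ℤ) - 1).negOnePow * (a k + a (k - 1)) =
      a 0 + ((n : ℤ) - 1).negOnePow * a n := by
  induction n with
  | zero => simp [Int.negOnePow_sub]
  | succ n ih =>
    rw [sum_Icc_succ_top (by omega), ih]
    push_cast
    rw [add_sub_cancel_right, Int.negOnePow_sub, Int.negOnePow_one, Units.val_mul, Units.val_neg,
      Units.val_one]
    ring

theorem stmt19_general (m : ℤ) (hmo : Odd m) (n : ℕ) :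
    fibZ m * ∑ k ∈ Finset.Icc 1 n,
        (((-1 : ℤˣ) ^ ((k : ℤ) - 1) : ℤˣ) : ℤ) * lucasZ (2 * m * k)
      = (((-1 : ℤˣ) ^ ((n : ℤ) - 1) : ℤˣ) : ℤ) * fibZ (m * n) * lucasZ (m * n + m) := by
  simp only [← Int.negOnePow_def]
  calc _ = ∑ k ∈ Icc 1 n, ((k : ℤ) - 1).negOnePow *
          (fibZ (2 * m * k + m) + fibZ (2 * m * (k - 1) + m)) := by
        rw [mul_sum]
        refine sum_congr rfl fun k _ => ?_
        rw [mul_left_comm, fibZ_mul_lucasZ_two_mul_of_odd hmo]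
        ring_nf
    _ = fibZ m + ((n : ℤ) - 1).negOnePow * fibZ (2 * m * n + m) := by
        rw [sum_Icc_negOnePow_mul_add_pred (fun j => fibZ (2 * m * j + m))]
        simp only [mul_zero, zero_add]
    _ = _ := by
        have hsign : (((n : ℤ) - 1).negOnePow * ((n : ℤ) + 1).negOnePow : ℤ) = 1 := by
          rw [← Units.val_mul, ← Int.negOnePow_add, Int.negOnePow_even _ ⟨n, by ring⟩, Units.val_one]
        rw [mul_assoc _ (fibZ _), fibZ_mul_lucasZ_add_self_of_odd hmo]
        linear_combination -fibZ m * hsign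

theorem stmt19 (m : ℤ) (hm : 0 < m) (hmo : Odd m) (n : ℕ) (hn : 0 < n) :
    fibZ m * ∑ k ∈ Finset.Icc 1 n,
        (((-1 : ℤˣ) ^ ((k : ℤ) - 1) : ℤˣ) : ℤ) * lucasZ (2 * m * k)
      = (((-1 : ℤˣ) ^ ((n : ℤ) - 1) : ℤˣ) : ℤ) * fibZ (m * n) * lucasZ (m * n + m) :=
  stmt19_general m hmo n
end
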